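/- arXiv:2406.00925 — 7 statements merged into one kernel-verified Lean document; each statement's English description precedes it below -/
import Mathlib

section
/- For smooth functions f, h : ℝ² → ℝ in variables (q,p), let {f,h} = (∂f/∂q)(∂h/∂p) - (∂f/∂p)(∂h/∂q). Define F(q,p) = cosh(p/2)/sinh(q) and G(q,p) = cosh((p-2q)/2)/cosh((p+2q)/2). Then for every (q,p) ∈ ℝ² with q ≠ 0, {F,G}(q,p) = F(q,p)·G(q,p). -/
/-! With `a = p / 2` all four partial derivatives are explicit, and the addition formulas for
`sinh` collapse the bracket to `F * G * (sinh a ^ 2 + cosh q ^ 2) / (cosh (a - q) * cosh (a + q))`,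
which is `F * G` because `cosh (a - q) * cosh (a + q) = sinh a ^ 2 + cosh q ^ 2`. -/

open Real

lemma cosh_sub_mul_cosh_add (x y : ℝ) :
    cosh (x - y) * cosh (x + y) = sinh x ^ 2 + cosh y ^ 2 := by
  rw [cosh_sub, cosh_add]
  linear_combination cosh y ^ 2 * cosh_sq x + sinh x ^ 2 * cosh_sq y

lemma hasDerivAt_const_div_sinh (c : ℝ) {x : ℝ} (hx : x ≠ 0) :
    HasDerivAt (fun y => c / sinh y) (-(c * cosh x) / sinh x ^ 2) x :=
  ((hasDerivAt_const x c).div (hasDerivAt_sinh x) (sinh_ne_zero.mpr hx)).congr_deriv (by ring)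

lemma hasDerivAt_cosh_div_cosh {f g : ℝ → ℝ} {f' g' x : ℝ} (hf : HasDerivAt f f' x)
    (hg : HasDerivAt g g' x) :
    HasDerivAt (fun y => cosh (f y) / cosh (g y))
      ((f' * sinh (f x) * cosh (g x) - g' * cosh (f x) * sinh (g x)) / cosh (g x) ^ 2) x :=
  (hf.cosh.div hg.cosh (cosh_pos _).ne').congr_deriv (by ring)

/-- The substitution `e^q → cosh(p/2)/sinh(q)`, `e^p → cosh((p-2q)/2)/cosh((p+2q)/2)`
is canonical: the images `F`, `G` satisfy `{F,G} = F·G` (for `q ≠ 0`), where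
`{f,h} = ∂_q f · ∂_p h - ∂_p f · ∂_q h` is the canonical Poisson bracket. -/
theorem canonical_change_of_variables_typeD
    (F G : ℝ → ℝ → ℝ)
    (hF : F = fun q p => Real.cosh (p / 2) / Real.sinh q)
    (hG : G = fun q p => Real.cosh ((p - 2 * q) / 2) / Real.cosh ((p + 2 * q) / 2)) :
    ∀ q p : ℝ, q ≠ 0 →
      deriv (fun q' => F q' p) q * deriv (fun p' => G q p') p
        - deriv (fun p' => F q p') p * deriv (fun q' => G q' p) q
      = F q p * G q p := by
  subst hF hG
  intro q p hq
  have hFq := hasDerivAt_const_div_sinh (cosh (p / 2)) hq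
  have hFp := ((hasDerivAt_id' p).div_const 2).cosh.div_const (sinh q)
  have hGp := hasDerivAt_cosh_div_cosh (((hasDerivAt_id' p).sub_const (2 * q)).div_const 2)
    (((hasDerivAt_id' p).add_const (2 * q)).div_const 2)
  have hGq := hasDerivAt_cosh_div_cosh ((((hasDerivAt_id' q).const_mul 2).const_sub p).div_const 2)
    ((((hasDerivAt_id' q).const_mul 2).const_add p).div_const 2)
  rw [hFq.deriv, hFp.deriv, hGp.deriv, hGq.deriv]
  obtain ⟨a, rfl⟩ : ∃ a, p = 2 * a := ⟨p / 2, by ring⟩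
  simp only [show (2 * a - 2 * q) / 2 = a - q by ring, show (2 * a + 2 * q) / 2 = a + q by ring,
    mul_div_cancel_left₀ a two_ne_zero]
  have hdiff :
      sinh (a - q) * cosh (a + q) - cosh (a - q) * sinh (a + q) = -(2 * sinh q * cosh q) := by
    rw [← sinh_sub, show a - q - (a + q) = -(2 * q) by ring, sinh_neg, sinh_two_mul]
  have hsum :
      sinh (a - q) * cosh (a + q) + cosh (a - q) * sinh (a + q) = 2 * sinh a * cosh a := by
    rw [← sinh_add, show a - q + (a + q) = 2 * a by ring, sinh_two_mul]
  have hs : sinh q ≠ 0 := sinh_ne_zero.mpr hq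
  field_simp
  linear_combination -(cosh a * cosh q) * hdiff + sinh q * sinh a * hsum
    - 2 * cosh a * sinh q * cosh_sub_mul_cosh_add a q
end

section
/- For smooth functions f, h : ℝ² → ℝ in variables (q,p), let {f,h} = (∂f/∂q)(∂h/∂p) - (∂f/∂p)(∂h/∂q). Define F(q,p) = sinh(q)/cosh(p/2) and G(q,p) = cosh((p+2q)/2)/cosh((p-2q)/2). Then for every (q,p) ∈ ℝ², {F,G}(q,p) = F(q,p)·G(q,p). -/
/-! Both partial derivatives of `G` are a single hyperbolic sine over `cosh² ((p - 2q)/2)`,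
namely `sinh (2q) / 2` in `p` and `sinh p` in `q`. After `sinh 2x = 2 sinh x cosh x` the bracket
becomes `F / cosh² ((p - 2q)/2) · (sinh² (p/2) + cosh² q)`, and the claim is the product formula
`cosh (x + y) cosh (x - y) = sinh² x + cosh² y` at `x = p/2`, `y = q`. -/

open Real

theorem Real.cosh_add_mul_cosh_sub (x y : ℝ) :
    cosh (x + y) * cosh (x - y) = sinh x ^ 2 + cosh y ^ 2 := by
  rw [cosh_add, cosh_sub]
  linear_combination cosh y ^ 2 * cosh_sq x + sinh x ^ 2 * cosh_sq y

theorem hasDerivAt_cosh_div_cosh_s2 {u v : ℝ → ℝ} {u' v' x : ℝ}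
    (hu : HasDerivAt u u' x) (hv : HasDerivAt v v' x) :
    HasDerivAt (fun t => cosh (u t) / cosh (v t))
      ((u' * sinh (u x) * cosh (v x) - v' * cosh (u x) * sinh (v x)) / cosh (v x) ^ 2) x :=
  (hu.cosh.div hv.cosh (cosh_pos _).ne').congr_deriv (by ring)

theorem hasDerivAt_const_div_cosh_half (c x : ℝ) :
    HasDerivAt (fun t => c / cosh (t / 2)) (-(c * sinh (x / 2)) / (2 * cosh (x / 2) ^ 2)) x :=
  ((hasDerivAt_const x c).div ((hasDerivAt_id' (x := x)).div_const 2).cosh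
    (cosh_pos _).ne').congr_deriv (by field_simp; ring)

section CoshRatio

variable (q p : ℝ)

theorem hasDerivAt_cosh_ratio_in_p :
    HasDerivAt (fun p' => cosh ((p' + 2 * q) / 2) / cosh ((p' - 2 * q) / 2))
      (sinh (2 * q) / (2 * cosh ((p - 2 * q) / 2) ^ 2)) p := by
  have hu : HasDerivAt (fun p' : ℝ => (p' + 2 * q) / 2) (1 / 2) p :=
    ((hasDerivAt_id p).add_const _).div_const 2
  have hv : HasDerivAt (fun p' : ℝ => (p' - 2 * q) / 2) (1 / 2) p :=
    ((hasDerivAt_id p).sub_const _).div_const 2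
  have hdiff : sinh (2 * q) = sinh ((p + 2 * q) / 2 - (p - 2 * q) / 2) := by ring_nf
  convert hasDerivAt_cosh_div_cosh_s2 hu hv using 1
  rw [hdiff, sinh_sub]
  ring

theorem hasDerivAt_cosh_ratio_in_q :
    HasDerivAt (fun q' => cosh ((p + 2 * q') / 2) / cosh ((p - 2 * q') / 2))
      (sinh p / cosh ((p - 2 * q) / 2) ^ 2) q := by
  have hu : HasDerivAt (fun q' : ℝ => (p + 2 * q') / 2) 1 q := by
    simpa using (((hasDerivAt_id q).const_mul 2).const_add p).div_const 2
  have hv : HasDerivAt (fun q' : ℝ => (p - 2 * q') / 2) (-1) q := by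
    simpa using (((hasDerivAt_id q).const_mul 2).const_sub p).div_const 2
  have hsum : sinh p = sinh ((p + 2 * q) / 2 + (p - 2 * q) / 2) := by ring_nf
  convert hasDerivAt_cosh_div_cosh_s2 hu hv using 1
  rw [hsum, sinh_add]
  ring

end CoshRatio

/-- The substitution `e^q → sinh(q)/cosh(p/2)`, `e^p → cosh((p+2q)/2)/cosh((p-2q)/2)`
is canonical: the images `F`, `G` satisfy `{F,G} = F·G` on all of ℝ², where
`{f,h} = ∂_q f · ∂_p h - ∂_p f · ∂_q h` is the canonical Poisson bracket. -/
theorem canonical_change_of_variables_typeD'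
    (F G : ℝ → ℝ → ℝ)
    (hF : F = fun q p => Real.sinh q / Real.cosh (p / 2))
    (hG : G = fun q p => Real.cosh ((p + 2 * q) / 2) / Real.cosh ((p - 2 * q) / 2)) :
    ∀ q p : ℝ,
      deriv (fun q' => F q' p) q * deriv (fun p' => G q p') p
        - deriv (fun p' => F q p') p * deriv (fun q' => G q' p) q
      = F q p * G q p := by
  subst hF hG
  intro q p
  rw [((hasDerivAt_sinh q).div_const _).deriv, (hasDerivAt_const_div_cosh_half _ p).deriv,
    (hasDerivAt_cosh_ratio_in_p q p).deriv, (hasDerivAt_cosh_ratio_in_q q p).deriv]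
  have hsinh : sinh p = 2 * sinh (p / 2) * cosh (p / 2) := by rw [← sinh_two_mul]; ring_nf
  have hprod :
      cosh ((p + 2 * q) / 2) * cosh ((p - 2 * q) / 2) = sinh (p / 2) ^ 2 + cosh q ^ 2 := by
    rw [← cosh_add_mul_cosh_sub]; ring_nf
  have hb := (cosh_pos ((p - 2 * q) / 2)).ne'
  have hc := (cosh_pos (p / 2)).ne'
  rw [sinh_two_mul, hsinh]
  field_simp
  linear_combination (-sinh q) * hprod
end

section
/- Let F be a field, A an associative unital F-algebra, and let U, V be units in A satisfying the Weyl-type relation V·U = H·(U·V) for some nonzero scalar H ∈ F. Let X, X' ∈ F be nonzero scalars and g ∈ F any scalar. Define 2×2 matrices over A: L(X) = [[X·U⁻¹ - X⁻¹·U, -g·V⁻¹],[g·V, 0]], and L(X') with X replaced by X' (same U, V, g). Define the 4×4 matrix R over A whose only nonzero entries (all scalar multiples of 1_A) are R₁₁ = R₄₄ = (X X'⁻¹ H - X⁻¹ X' H⁻¹)·1, R₂₂ = R₃₃ = (X X'⁻¹ - X⁻¹ X')·1, and R₂₃ = R₃₂ = (H - H⁻¹)·1 (rows/columns ordered (1,1),(1,2),(2,1),(2,2)).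 Then, with ⊗ denoting the Kronecker product of matrices and I₂ the 2×2 identity over A, the Yang–Baxter RLL relation holds: R·(L(X) ⊗ I₂)·(I₂ ⊗ L(X')) = (I₂ ⊗ L(X'))·(L(X) ⊗ I₂)·R. -/
open Matrix Kronecker

/-- The 2×2 Lax matrix `L(X) = [[X U⁻¹ - X⁻¹ U, -g V⁻¹],[g V, 0]]` over an `F`-algebra `A`. -/
def rtlLax (F : Type*) [Field F] (A : Type*) [Ring A] [Algebra F A]
    (U V : Aˣ) (g X : F) : Matrix (Fin 2) (Fin 2) A :=
  !![algebraMap F A X * (↑U⁻¹ : A) - algebraMap F A X⁻¹ * (U : A),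
      -(algebraMap F A g * (↑V⁻¹ : A));
    algebraMap F A g * (V : A), 0]

/-- The 4×4 trigonometric R-matrix with rows/columns indexed by `Fin 2 × Fin 2` in the order
`(1,1),(1,2),(2,1),(2,2)`: diagonal entries `X X'⁻¹ H - X⁻¹ X' H⁻¹` at `(1,1),(4,4)` and
`X X'⁻¹ - X⁻¹ X'` at `(2,2),(3,3)`, off-diagonal entries `H - H⁻¹` at `(2,3),(3,2)`. -/
def rtlR (F : Type*) [Field F] (A : Type*) [Ring A] [Algebra F A]
    (X X' H : F) : Matrix (Fin 2 × Fin 2) (Fin 2 × Fin 2) A :=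
  Matrix.of fun ij kl =>
    if ij = kl then
      (if ij.1 = ij.2 then algebraMap F A (X * X'⁻¹ * H - X⁻¹ * X' * H⁻¹)
       else algebraMap F A (X * X'⁻¹ - X⁻¹ * X'))
    else if ij.1 ≠ ij.2 ∧ kl.1 ≠ kl.2 then algebraMap F A (H - H⁻¹)
    else 0

/-!
The Weyl relation `V U = H U V` propagates to every pair `U^{±1}`, `V^{±1}` with factor `H^{±1}`.
Using these relations to move all `U`'s to the left, each entry of both sides of the RLL relation
becomes an `F`-linear combination of the words `U^{±1} V^{±1}`, and the coefficients agree as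
rational functions of `X`, `X'`, `H`.
-/

section

variable {R A : Type*} [CommSemiring R] [Semiring A] [Algebra R A]

def QCommute (q : R) (a b : A) : Prop := a * b = q • (b * a)

namespace QCommute

variable {q : R} {a b : A}

theorem eq_smul (h : QCommute q a b) : a * b = q • (b * a) := h

theorem units_inv_left {w : Aˣ} (h : QCommute q (w : A) b) : QCommute q b ↑w⁻¹ := by
  have := congrArg (fun x => (↑w⁻¹ : A) * x * ↑w⁻¹) h
  simpa [QCommute, mul_assoc, mul_smul_comm, smul_mul_assoc] using this

theorem units_inv_right {u : Aˣ} (h : QCommute q a (u : A)) : QCommute q ↑u⁻¹ a := by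
  have := congrArg (fun x => (↑u⁻¹ : A) * x * ↑u⁻¹) h
  simpa [QCommute, mul_assoc, mul_smul_comm, smul_mul_assoc] using this

theorem symm {K : Type*} [Semifield K] [Algebra K A] {q : K} (hq : q ≠ 0)
    (h : QCommute q a b) : QCommute q⁻¹ b a := by
  rw [QCommute, h, smul_smul, inv_mul_cancel₀ hq, one_smul]

end QCommute

end

/-- the Yang–Baxter RLL (train-track) relation
`R · (L(X) ⊗ I₂) · (I₂ ⊗ L(X')) = (I₂ ⊗ L(X')) · (L(X) ⊗ I₂) · R`
for units `U, V` satisfying the Weyl relation `V U = H (U V)`. -/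
theorem rtl_RLL_relation (F : Type*) [Field F] (A : Type*) [Ring A] [Algebra F A]
    (U V : Aˣ) (H : F) (hH : H ≠ 0)
    (hWeyl : (V : A) * (U : A) = algebraMap F A H * ((U : A) * (V : A)))
    (X X' : F) (hX : X ≠ 0) (hX' : X' ≠ 0) (g : F) :
    rtlR F A X X' H
        * (rtlLax F A U V g X ⊗ₖ (1 : Matrix (Fin 2) (Fin 2) A))
        * ((1 : Matrix (Fin 2) (Fin 2) A) ⊗ₖ rtlLax F A U V g X')
      = ((1 : Matrix (Fin 2) (Fin 2) A) ⊗ₖ rtlLax F A U V g X')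
        * (rtlLax F A U V g X ⊗ₖ (1 : Matrix (Fin 2) (Fin 2) A))
        * rtlR F A X X' H := by
  have hVU : QCommute H (V : A) U := by rw [QCommute, hWeyl, Algebra.smul_def]
  have hVUi : QCommute H⁻¹ (V : A) ↑U⁻¹ := hVU.units_inv_right.symm hH
  have hViU : QCommute H⁻¹ (↑V⁻¹ : A) U := hVU.units_inv_left.symm hH
  have hViUi : QCommute H (↑V⁻¹ : A) ↑U⁻¹ := by
    simpa using hViU.units_inv_right.symm (inv_ne_zero hH)
  ext ⟨i, j⟩ ⟨k, l⟩
  fin_cases i <;> fin_cases j <;> fin_cases k <;> fin_cases l <;>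
    simp [rtlR, rtlLax, mul_apply, Fintype.sum_prod_type, one_apply,
      Algebra.algebraMap_eq_smul_one, mul_assoc, mul_sub, sub_mul,
      hVU.eq_smul, hVUi.eq_smul, hViU.eq_smul, hViUi.eq_smul] <;>
    match_scalars <;> field_simp <;> ring
end

section
/- Let q₁, q₂, q₇, q₈, p₁, p₂, p₇, p₈ be real numbers, and set q₃=-q₂, q₄=-q₁, q₅=-q₈, q₆=-q₇, p₃=-p₂, p₄=-p₁, p₅=-p₈, p₆=-p₇. Define E₁ = e^{p₁}[1 + e^{q₁-q₂} - e^{q₁-q₂+p₂} - e^{q₁-q₃+p₂} + e^{q₁-q₃+p₂+p₃} + e^{q₁-q₄+p₂+p₃}] + e^{p₂}[1 + e^{q₂-q₃} - e^{q₂-q₃-p₂} - e^{q₂-q₃+p₃} + e^{q₂-q₃-p₂+p₃} - e^{q₂-q₄+p₃} + e^{q₂-q₄-p₂+p₃}] + e^{p₃}[1 + e^{q₃-q₄} - e^{q₃-q₄-p₃}] + e^{p₄}[1 + e^{q₄-q₅}] + e^{p₅}[1 + e^{q₅-q₆} - e^{q₅-q₆+p₆} - e^{q₅-q₇+p₆}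 + e^{q₅-q₇+p₆+p₇} + e^{q₅-q₈+p₆+p₇}] + e^{p₆}[1 + e^{q₆-q₇} - e^{q₆-q₇-p₆} - e^{q₆-q₇+p₇} + e^{q₆-q₇-p₆+p₇} - e^{q₆-q₈+p₇} + e^{q₆-q₈-p₆+p₇}] + e^{p₇}[1 + e^{q₇-q₈} - e^{q₇-q₈-p₇}] + e^{p₈}[1 + e^{q₈-q₁}], and define E₇ = e^{-p₁}[1 + e^{q₈-q₁}] + e^{-p₂}[1 + e^{q₁-q₂} - e^{q₁-q₂+p₂}] + e^{-p₃}[1 + e^{q₂-q₃} - e^{q₂-q₃-p₂} - e^{q₂-q₃+p₃} + e^{q₂-q₃-p₂+p₃} - e^{q₁-q₃-p₂} + e^{q₁-q₃-p₂+p₃}] + e^{-p₄}[1 + e^{q₃-q₄} - e^{q₃-q₄-p₃} - e^{q₂-q₄-p₃} + e^{q₂-q₄-p₃-p₂} + e^{q₁-q₄-p₃-p₂}] + e^{-p₅}[1 + e^{q₄-q₅}] + e^{-p₆}[1 + e^{q₅-q₆} - e^{q₅-q₆+p₆}] + e^{-p₇}[1 + e^{q₆-q₇} - e^{q₆-q₇-p₆}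 - e^{q₆-q₇+p₇} + e^{q₆-q₇-p₆+p₇} - e^{q₅-q₇-p₆} + e^{q₅-q₇-p₆+p₇}] + e^{-p₈}[1 + e^{q₇-q₈} - e^{q₇-q₈-p₇} - e^{q₆-q₈-p₇} + e^{q₆-q₈-p₇-p₆} + e^{q₅-q₈-p₇-p₆}]. Then E₁ = E₇, and both equal 2cosh p₁ + 2cosh p₂ + 2cosh p₇ + 2cosh p₈ + e^{q₁-q₂}(e^{p₁} + e^{-p₂} - 1 - e^{p₁+p₂}) + e^{q₇-q₈}(e^{p₇} + e^{-p₈} - 1 - e^{-p₇-p₈}) + e^{q₈-q₁}(e^{-p₁} + e^{p₈}) + e^{q₁+q₂}(e^{p₁} + e^{-p₂} - 1 - e^{p₁+p₂}) + e^{-q₇-q₈}(e^{p₇} + e^{-p₈} - 1 - e^{-p₇-p₈}) + e^{2q₁+p₁} + e^{2q₂}(e^{p₂} - 2 + e^{-p₂}) + e^{-2q₇}(e^{p₇} - 2 + e^{-p₇}) + e^{-2q₈-p₈}. -/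
/-!
Under the folding the chain splits into two mirror-image halves, sites `1…4` and `5…8`, joined only
through `e^{q₈-q₁}`: the second half is the first one evaluated at `(q₁, q₂, p₁, p₂) ↦ (-q₈, -q₇, -p₈, -p₇)`.
So each of `E₁` and `E₇` reduces to one identity in four variables for a single half, plus the coupling
terms; that identity is a Laurent-polynomial identity in the `e^{qᵢ}`, `e^{pᵢ}`.
-/

open Real

noncomputable section

/-- Sites `1…4` of `E₁`, without the coupling term `e^{p₄ + q₄ - q₅}`. -/
def dimerE₁Half (q₁ q₂ q₃ q₄ p₁ p₂ p₃ p₄ : ℝ) : ℝ :=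
  exp p₁ * (1 + exp (q₁ - q₂) - exp (q₁ - q₂ + p₂) - exp (q₁ - q₃ + p₂)
      + exp (q₁ - q₃ + p₂ + p₃) + exp (q₁ - q₄ + p₂ + p₃))
    + exp p₂ * (1 + exp (q₂ - q₃) - exp (q₂ - q₃ - p₂) - exp (q₂ - q₃ + p₃)
      + exp (q₂ - q₃ - p₂ + p₃) - exp (q₂ - q₄ + p₃) + exp (q₂ - q₄ - p₂ + p₃))
    + exp p₃ * (1 + exp (q₃ - q₄) - exp (q₃ - q₄ - p₃))
    + exp p₄

/-- Sites `1…4` of `E₇`, without the coupling term `e^{-p₁ + q₈ - q₁}`. -/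
def dimerE₇Half (q₁ q₂ q₃ q₄ p₁ p₂ p₃ p₄ : ℝ) : ℝ :=
  exp (-p₁)
    + exp (-p₂) * (1 + exp (q₁ - q₂) - exp (q₁ - q₂ + p₂))
    + exp (-p₃) * (1 + exp (q₂ - q₃) - exp (q₂ - q₃ - p₂) - exp (q₂ - q₃ + p₃)
      + exp (q₂ - q₃ - p₂ + p₃) - exp (q₁ - q₃ - p₂) + exp (q₁ - q₃ - p₂ + p₃))
    + exp (-p₄) * (1 + exp (q₃ - q₄) - exp (q₃ - q₄ - p₃) - exp (q₂ - q₄ - p₃)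
      + exp (q₂ - q₄ - p₃ - p₂) + exp (q₁ - q₄ - p₃ - p₂))

def foldedHalf (a b u v : ℝ) : ℝ :=
  2 * cosh u + 2 * cosh v
    + exp (a - b) * (exp u + exp (-v) - 1 - exp (u + v))
    + exp (a + b) * (exp u + exp (-v) - 1 - exp (u + v))
    + exp (2 * a + u) + exp (2 * b) * (exp v - 2 + exp (-v))

theorem dimerE₁Half_fold (a b u v : ℝ) :
    dimerE₁Half a b (-b) (-a) u v (-v) (-u) = foldedHalf a b u v := by
  simp only [dimerE₁Half, foldedHalf, cosh_eq, exp_add, exp_sub, exp_neg, two_mul]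
  have := (exp_pos a).ne'; have := (exp_pos b).ne'
  have := (exp_pos u).ne'; have := (exp_pos v).ne'
  field_simp
  ring

theorem dimerE₇Half_fold (a b u v : ℝ) :
    dimerE₇Half a b (-b) (-a) u v (-v) (-u) = foldedHalf a b u v := by
  simp only [dimerE₇Half, foldedHalf, cosh_eq, exp_add, exp_sub, exp_neg, two_mul]
  have := (exp_pos a).ne'; have := (exp_pos b).ne'
  have := (exp_pos u).ne'; have := (exp_pos v).ne'
  field_simp
  ring

theorem foldedHalf_neg (a b u v : ℝ) :
    foldedHalf (-a) (-b) (-u) (-v) = 2 * cosh u + 2 * cosh v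
      + exp (b - a) * (exp v + exp (-u) - 1 - exp (-v - u))
      + exp (-b - a) * (exp v + exp (-u) - 1 - exp (-v - u))
      + exp (-2 * a - u) + exp (-2 * b) * (exp v - 2 + exp (-v)) := by
  simp only [foldedHalf, cosh_neg, neg_neg]
  rw [show -a - -b = b - a by ring, show -a + -b = -b - a by ring, show -u + -v = -v - u by ring,
    show 2 * -a + -u = -2 * a - u by ring, show 2 * -b = -2 * b by ring]
  ring

end

/-- under the folding identifications `q₃=-q₂, q₄=-q₁, q₅=-q₈, q₆=-q₇`,
`p₃=-p₂, p₄=-p₁, p₅=-p₈, p₆=-p₇`, the first and seventh Hamiltonians `E₁`, `E₇` of the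
double-impurity `SU(8)+8F` dimer coincide and equal the stated folded expression. -/
theorem folded_SU8_dimer_hamiltonians
    (q₁ q₂ q₇ q₈ p₁ p₂ p₇ p₈ q₃ q₄ q₅ q₆ p₃ p₄ p₅ p₆ E₁ E₇ : ℝ)
    (hq₃ : q₃ = -q₂) (hq₄ : q₄ = -q₁) (hq₅ : q₅ = -q₈) (hq₆ : q₆ = -q₇)
    (hp₃ : p₃ = -p₂) (hp₄ : p₄ = -p₁) (hp₅ : p₅ = -p₈) (hp₆ : p₆ = -p₇)
    (hE₁ : E₁ =
      Real.exp p₁ * (1 + Real.exp (q₁ - q₂) - Real.exp (q₁ - q₂ + p₂) - Real.exp (q₁ - q₃ + p₂)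
        + Real.exp (q₁ - q₃ + p₂ + p₃) + Real.exp (q₁ - q₄ + p₂ + p₃))
      + Real.exp p₂ * (1 + Real.exp (q₂ - q₃) - Real.exp (q₂ - q₃ - p₂) - Real.exp (q₂ - q₃ + p₃)
        + Real.exp (q₂ - q₃ - p₂ + p₃) - Real.exp (q₂ - q₄ + p₃) + Real.exp (q₂ - q₄ - p₂ + p₃))
      + Real.exp p₃ * (1 + Real.exp (q₃ - q₄) - Real.exp (q₃ - q₄ - p₃))
      + Real.exp p₄ * (1 + Real.exp (q₄ - q₅))
      + Real.exp p₅ * (1 + Real.exp (q₅ - q₆) - Real.exp (q₅ - q₆ + p₆) - Real.exp (q₅ - q₇ + p₆)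
        + Real.exp (q₅ - q₇ + p₆ + p₇) + Real.exp (q₅ - q₈ + p₆ + p₇))
      + Real.exp p₆ * (1 + Real.exp (q₆ - q₇) - Real.exp (q₆ - q₇ - p₆) - Real.exp (q₆ - q₇ + p₇)
        + Real.exp (q₆ - q₇ - p₆ + p₇) - Real.exp (q₆ - q₈ + p₇) + Real.exp (q₆ - q₈ - p₆ + p₇))
      + Real.exp p₇ * (1 + Real.exp (q₇ - q₈) - Real.exp (q₇ - q₈ - p₇))
      + Real.exp p₈ * (1 + Real.exp (q₈ - q₁)))
    (hE₇ : E₇ =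
      Real.exp (-p₁) * (1 + Real.exp (q₈ - q₁))
      + Real.exp (-p₂) * (1 + Real.exp (q₁ - q₂) - Real.exp (q₁ - q₂ + p₂))
      + Real.exp (-p₃) * (1 + Real.exp (q₂ - q₃) - Real.exp (q₂ - q₃ - p₂) - Real.exp (q₂ - q₃ + p₃)
        + Real.exp (q₂ - q₃ - p₂ + p₃) - Real.exp (q₁ - q₃ - p₂) + Real.exp (q₁ - q₃ - p₂ + p₃))
      + Real.exp (-p₄) * (1 + Real.exp (q₃ - q₄) - Real.exp (q₃ - q₄ - p₃) - Real.exp (q₂ - q₄ - p₃)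
        + Real.exp (q₂ - q₄ - p₃ - p₂) + Real.exp (q₁ - q₄ - p₃ - p₂))
      + Real.exp (-p₅) * (1 + Real.exp (q₄ - q₅))
      + Real.exp (-p₆) * (1 + Real.exp (q₅ - q₆) - Real.exp (q₅ - q₆ + p₆))
      + Real.exp (-p₇) * (1 + Real.exp (q₆ - q₇) - Real.exp (q₆ - q₇ - p₆) - Real.exp (q₆ - q₇ + p₇)
        + Real.exp (q₆ - q₇ - p₆ + p₇) - Real.exp (q₅ - q₇ - p₆) + Real.exp (q₅ - q₇ - p₆ + p₇))
      + Real.exp (-p₈) * (1 + Real.exp (q₇ - q₈) - Real.exp (q₇ - q₈ - p₇) - Real.exp (q₆ - q₈ - p₇)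
        + Real.exp (q₆ - q₈ - p₇ - p₆) + Real.exp (q₅ - q₈ - p₇ - p₆))) :
    E₁ = E₇ ∧
    E₁ = 2 * Real.cosh p₁ + 2 * Real.cosh p₂ + 2 * Real.cosh p₇ + 2 * Real.cosh p₈
      + Real.exp (q₁ - q₂) * (Real.exp p₁ + Real.exp (-p₂) - 1 - Real.exp (p₁ + p₂))
      + Real.exp (q₇ - q₈) * (Real.exp p₇ + Real.exp (-p₈) - 1 - Real.exp (-p₇ - p₈))
      + Real.exp (q₈ - q₁) * (Real.exp (-p₁) + Real.exp p₈)
      + Real.exp (q₁ + q₂) * (Real.exp p₁ + Real.exp (-p₂) - 1 - Real.exp (p₁ + p₂))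
      + Real.exp (-q₇ - q₈) * (Real.exp p₇ + Real.exp (-p₈) - 1 - Real.exp (-p₇ - p₈))
      + Real.exp (2 * q₁ + p₁) + Real.exp (2 * q₂) * (Real.exp p₂ - 2 + Real.exp (-p₂))
      + Real.exp (-2 * q₇) * (Real.exp p₇ - 2 + Real.exp (-p₇))
      + Real.exp (-2 * q₈ - p₈) := by
  subst hq₃ hq₄ hq₅ hq₆ hp₃ hp₄ hp₅ hp₆
  have hcoupling : -q₁ - -q₈ = q₈ - q₁ := by ring
  have h₁ : E₁ = foldedHalf q₁ q₂ p₁ p₂ + foldedHalf (-q₈) (-q₇) (-p₈) (-p₇)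
      + exp (q₈ - q₁) * (exp (-p₁) + exp p₈) := by
    rw [← dimerE₁Half_fold, ← dimerE₁Half_fold, hE₁, hcoupling]
    simp only [dimerE₁Half, neg_neg]
    ring
  have h₇ : E₇ = foldedHalf q₁ q₂ p₁ p₂ + foldedHalf (-q₈) (-q₇) (-p₈) (-p₇)
      + exp (q₈ - q₁) * (exp (-p₁) + exp p₈) := by
    rw [← dimerE₇Half_fold, ← dimerE₇Half_fold, hE₇, hcoupling]
    simp only [dimerE₇Half, neg_neg]
    ring
  refine ⟨h₁.trans h₇.symm, ?_⟩
  rw [h₁, foldedHalf_neg]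
  unfold foldedHalf
  ring
end

section
/- Let n ≥ 1 and let L, M, C : ℝ → Matrix (Fin n) (Fin n) ℝ be differentiable matrix-valued functions such that L(t) is invertible for every t, the trace of C(t) is 0 for every t, and L satisfies the weak Lax triad equation L'(t) = L(t)·M(t) - M(t)·L(t) + C(t)·L(t) for every t. Then the function t ↦ det L(t) is constant. -/
/-!
Jacobi's formula in adjugate form, `(det L)' = trace (L' * adj L)`, together with
`L * adj L = adj L * L = det L • 1`, turns the weak Lax triad into
`(det L)' = det L * trace C = 0`; the adjugate form needs no invertibility of `L`.
-/

open Matrix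

attribute [local instance] Matrix.normedAddCommGroup Matrix.normedSpace

namespace Matrix

section CommRing

variable {n R : Type*} [Fintype n] [DecidableEq n] [CommRing R]

theorem sum_det_updateRow_eq_trace_mul_adjugate (A D : Matrix n n R) :
    ∑ i, (A.updateRow i (D i)).det = trace (D * adjugate A) := by
  simp only [← cramer_transpose_apply, cramer_eq_adjugate_mulVec, ← adjugate_transpose,
    trace, diag, mul_apply, mulVec, dotProduct, transpose_apply, mul_comm]

theorem trace_mul_mul_adjugate (X L : Matrix n n R) :
    trace (X * L * adjugate L) = L.det * trace X := by
  rw [Matrix.mul_assoc, mul_adjugate, mul_smul_comm, Matrix.mul_one, trace_smul, smul_eq_mul]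

theorem trace_weakLaxTriad_mul_adjugate (L M C : Matrix n n R) :
    trace ((L * M - M * L + C * L) * adjugate L) = L.det * trace C := by
  have hLM : trace (L * M * adjugate L) = L.det * trace M := by
    rw [trace_mul_comm, ← Matrix.mul_assoc, adjugate_mul, smul_mul_assoc, Matrix.one_mul,
      trace_smul, smul_eq_mul]
  rw [add_mul, sub_mul, trace_add, trace_sub, hLM, trace_mul_mul_adjugate,
    trace_mul_mul_adjugate, sub_self, zero_add]

end CommRing

variable {𝕜 n : Type*} [NontriviallyNormedField 𝕜] [Fintype n] [DecidableEq n]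

def detRowContinuousMultilinear : ContinuousMultilinearMap 𝕜 (fun _ : n => n → 𝕜) 𝕜 :=
  { (detRowAlternating : (n → 𝕜) [⋀^n]→ₗ[𝕜] 𝕜).toMultilinearMap with
    cont := continuous_id.matrix_det }

end Matrix

theorem HasDerivAt.matrix_det {𝕜 n : Type*} [NontriviallyNormedField 𝕜] [Fintype n]
    [DecidableEq n] {L : 𝕜 → Matrix n n 𝕜} {L' : Matrix n n 𝕜} {t : 𝕜}
    (hL : HasDerivAt L L' t) :
    HasDerivAt (fun s => (L s).det) (trace (L' * adjugate (L t))) t :=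
  (((detRowContinuousMultilinear (𝕜 := 𝕜) (n := n)).hasFDerivAt (L t)).comp_hasDerivAt t hL).congr_deriv <|
    (ContinuousMultilinearMap.linearDeriv_apply _ _ _).trans
      (sum_det_updateRow_eq_trace_mul_adjugate _ _)

theorem weak_lax_triad_det_const_general (n : ℕ)
    (L M C : ℝ → Matrix (Fin n) (Fin n) ℝ)
    (hCtrace : ∀ t, (C t).trace = 0)
    (hLax : ∀ t, HasDerivAt L (L t * M t - M t * L t + C t * L t) t) :
    ∀ s t : ℝ, (L s).det = (L t).det := by
  have hdet : ∀ t, HasDerivAt (fun s => (L s).det) 0 t := fun t => by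
    simpa only [trace_weakLaxTriad_mul_adjugate, hCtrace, mul_zero] using (hLax t).matrix_det
  exact is_const_of_deriv_eq_zero (fun t => (hdet t).differentiableAt) fun t => (hdet t).deriv

/-- if `L, M, C : ℝ → Matrix (Fin n) (Fin n) ℝ` are differentiable, `L(t)` is
invertible for all `t`, `C(t)` is traceless for all `t`, and `L` obeys the weak Lax triad
`L' = LM - ML + CL`, then `det L(t)` is constant. -/
theorem weak_lax_triad_det_const (n : ℕ) (hn : 1 ≤ n)
    (L M C : ℝ → Matrix (Fin n) (Fin n) ℝ)
    (hM : Differentiable ℝ M) (hC : Differentiable ℝ C)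
    (hLunit : ∀ t, IsUnit (L t))
    (hCtrace : ∀ t, (C t).trace = 0)
    (hLax : ∀ t, HasDerivAt L (L t * M t - M t * L t + C t * L t) t) :
    ∀ s t : ℝ, (L s).det = (L t).det :=
  weak_lax_triad_det_const_general n L M C hCtrace hLax
end

section
/- Let X > 0 and let p, q be real numbers. Define the 2×2 real matrices K₊(X) = [[2√X cosh((p-2q)/2) - (2/√X) cosh((p+2q)/2), X + X⁻¹ - 2 cosh 2q],[-X - X⁻¹ + 2 cosh p, 2√X cosh((p+2q)/2) - (2/√X) cosh((p-2q)/2)]] and K₋(X) = [[2√X cosh((p+2q)/2) - (2/√X) cosh((p-2q)/2), -X - X⁻¹ + 2 cosh p],[X + X⁻¹ - 2 cosh 2q, 2√X cosh((p-2q)/2) - (2/√X) cosh((p+2q)/2)]]. Then det K₊(X) = (X - X⁻¹)² and det K₋(X) = (X - X⁻¹)². -/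
open Matrix Real

/-! With `s = √X`, `a = p / 2` and `b = q`, the addition formulas turn the diagonal of `K₊(X)` into
`(s - s⁻¹) cosh a cosh b ∓ (s + s⁻¹) sinh a sinh b`, so the determinant is a polynomial in `s`, `s⁻¹`
and the hyperbolic functions of `a` and `b`; modulo `cosh² - sinh² = 1` it collapses to
`(s² - s⁻²)²`. The matrix `K₋(X)` is the transpose of `K₊(X)` with `q` replaced by `-q`. -/

noncomputable def kPlus (X p q : ℝ) : Matrix (Fin 2) (Fin 2) ℝ :=
  !![2 * Real.sqrt X * Real.cosh ((p - 2 * q) / 2)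
      - (2 / Real.sqrt X) * Real.cosh ((p + 2 * q) / 2),
    X + X⁻¹ - 2 * Real.cosh (2 * q);
    -X - X⁻¹ + 2 * Real.cosh p,
    2 * Real.sqrt X * Real.cosh ((p + 2 * q) / 2)
      - (2 / Real.sqrt X) * Real.cosh ((p - 2 * q) / 2)]

noncomputable def kMinus (X p q : ℝ) : Matrix (Fin 2) (Fin 2) ℝ :=
  !![2 * Real.sqrt X * Real.cosh ((p + 2 * q) / 2)
      - (2 / Real.sqrt X) * Real.cosh ((p - 2 * q) / 2),
    -X - X⁻¹ + 2 * Real.cosh p;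
    X + X⁻¹ - 2 * Real.cosh (2 * q),
    2 * Real.sqrt X * Real.cosh ((p - 2 * q) / 2)
      - (2 / Real.sqrt X) * Real.cosh ((p + 2 * q) / 2)]

theorem det_kPlus {X : ℝ} (hX : 0 < X) (p q : ℝ) : (kPlus X p q).det = (X - X⁻¹) ^ 2 := by
  obtain ⟨s, hs, rfl⟩ : ∃ s, 0 < s ∧ X = s ^ 2 := ⟨√X, sqrt_pos.2 hX, (sq_sqrt hX.le).symm⟩
  have hp : cosh p = cosh (p / 2) ^ 2 + sinh (p / 2) ^ 2 := by
    rw [← cosh_two_mul]; ring_nf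
  rw [kPlus, det_fin_two_of, sqrt_sq hs.le, show (p - 2 * q) / 2 = p / 2 - q by ring,
    show (p + 2 * q) / 2 = p / 2 + q by ring, cosh_sub, cosh_add, cosh_two_mul, hp]
  linear_combination (norm := skip)
    (4 * ((s - s⁻¹) ^ 2 + 1) * cosh q ^ 2 + 4 * sinh q ^ 2 - 2 * (s - s⁻¹) ^ 2 - 4)
        * cosh_sq_sub_sinh_sq (p / 2)
      + (4 * ((s - s⁻¹) ^ 2 + 2) * sinh (p / 2) ^ 2 + 2 * (s - s⁻¹) ^ 2)
        * cosh_sq_sub_sinh_sq q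
  field_simp
  ring

theorem kMinus_eq_transpose_kPlus (X p q : ℝ) : kMinus X p q = (kPlus X p (-q))ᵀ := by
  ext i j
  fin_cases i <;> fin_cases j <;> simp [kMinus, kPlus, ← sub_eq_add_neg]

/-- the determinants of the boundary reflection matrices `K₊(X)`, `K₋(X)` of
the type D relativistic Toda lattice both equal `(X - X⁻¹)²` for `X > 0`. -/
theorem reflection_matrices_det (X p q : ℝ) (hX : 0 < X)
    (Kp Km : Matrix (Fin 2) (Fin 2) ℝ)
    (hKp : Kp = !![2 * Real.sqrt X * Real.cosh ((p - 2 * q) / 2)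
                    - (2 / Real.sqrt X) * Real.cosh ((p + 2 * q) / 2),
                  X + X⁻¹ - 2 * Real.cosh (2 * q);
                  -X - X⁻¹ + 2 * Real.cosh p,
                  2 * Real.sqrt X * Real.cosh ((p + 2 * q) / 2)
                    - (2 / Real.sqrt X) * Real.cosh ((p - 2 * q) / 2)])
    (hKm : Km = !![2 * Real.sqrt X * Real.cosh ((p + 2 * q) / 2)
                    - (2 / Real.sqrt X) * Real.cosh ((p - 2 * q) / 2),
                  -X - X⁻¹ + 2 * Real.cosh p;
                  X + X⁻¹ - 2 * Real.cosh (2 * q),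
                  2 * Real.sqrt X * Real.cosh ((p - 2 * q) / 2)
                    - (2 / Real.sqrt X) * Real.cosh ((p + 2 * q) / 2)]) :
    Kp.det = (X - X⁻¹) ^ 2 ∧ Km.det = (X - X⁻¹) ^ 2 := by
  change Kp = kPlus X p q at hKp
  change Km = kMinus X p q at hKm
  subst hKp hKm
  refine ⟨det_kPlus hX p q, ?_⟩
  rw [kMinus_eq_transpose_kPlus, det_transpose, det_kPlus hX]
end

section
/- Let N ≥ 3 and let q₁,…,q_N, p₁,…,p_N be real numbers. Define S₀ = e^{-2q₁}, S_N = e^{2q_N}, and S_n = exp(q_n - q_{n+1} + (-1)ⁿ (p_n - p_{n+1})/2) for 1 ≤ n ≤ N-1. Then Σ_{n=1}^{N} 2 cosh p_n + Σ_{n=1}^{N-1} S_n (e^{-(-1)ⁿ p_n} + e^{-(-1)^{n+1} p_{n+1}}) + S₁ S₀ (e^{p₁} + e^{-p₂}) + S_{N-1} S_N (e^{-(-1)^{N-1} p_{N-1}} + e^{-(-1)^N p_N}) + e^{-2q₂} + e^{2q_{N-1}} = Σ_{n=1}^{N} 2 cosh p_n + Σ_{n=1}^{N-1} 2 e^{q_n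 - q_{n+1}} cosh((p_n + p_{n+1})/2) + 2 e^{-q₁ - q₂} cosh((p₁ + p₂)/2) + 2 e^{q_{N-1} + q_N} cosh((p_{N-1} + p_N)/2) + e^{-2q₂} + e^{2q_{N-1}}. -/
/-!
Every square-loop weight `S_n` carries the half-momentum shift `±(p_n - p_{n+1})/2`, whose sign
`(-1)ⁿ` is the same one that decides which of `e^{±p_n}`, `e^{±p_{n+1}}` its two 1-loops carry.
Multiplying out therefore always gives `e^{a}(e^{(p_n+p_{n+1})/2} + e^{-(p_n+p_{n+1})/2})`,
i.e. a Toda term `2 e^{a} cosh((p_n+p_{n+1})/2)`. This accounts for the bulk terms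
(`a = q_n - q_{n+1}`) and, since `S₀` and `S_N` are pure position factors, also for the two
boundary terms (`a = -q₁ - q₂` at `n = 1`, `a = q_{N-1} + q_N` at `n = N - 1`).
-/

open Real

lemma exp_add_half_sub_mul_exp_neg_add_exp (a x y : ℝ) :
    exp (a + (x - y) / 2) * (exp (-x) + exp y) = 2 * exp a * cosh ((x + y) / 2) := by
  rw [cosh_eq, mul_add, ← exp_add, ← exp_add,
    show a + (x - y) / 2 + -x = a + -((x + y) / 2) by ring,
    show a + (x - y) / 2 + y = a + (x + y) / 2 by ring, exp_add, exp_add]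
  ring

lemma exp_add_neg_one_pow_half_sub_mul (a x y : ℝ) (n : ℕ) :
    exp (a + (-1) ^ n * (x - y) / 2) * (exp (-(-1) ^ n * x) + exp (-(-1) ^ (n + 1) * y))
      = 2 * exp a * cosh ((x + y) / 2) := by
  rcases Nat.even_or_odd n with hn | hn
  · simpa [hn.neg_one_pow, hn.add_one.neg_one_pow] using
      exp_add_half_sub_mul_exp_neg_add_exp a x y
  · have := exp_add_half_sub_mul_exp_neg_add_exp a y x
    rw [add_comm y x, add_comm (exp (-y))] at this
    rw [hn.neg_one_pow, hn.add_one.neg_one_pow, ← this]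
    ring_nf

lemma exp_add_neg_one_pow_half_sub_mul_exp_mul (a b x y : ℝ) (n : ℕ) :
    exp (a + (-1) ^ n * (x - y) / 2) * exp b *
        (exp (-(-1) ^ n * x) + exp (-(-1) ^ (n + 1) * y))
      = 2 * exp (a + b) * cosh ((x + y) / 2) := by
  rw [mul_right_comm, exp_add_neg_one_pow_half_sub_mul, exp_add]
  ring

/-- the first Hamiltonian of the `D_N` dimer integrable system, written via the
square-loop weights `S₀ = e^{-2q₁}`, `S_N = e^{2q_N}`,
`S_n = exp(q_n - q_{n+1} + (-1)ⁿ(p_n - p_{n+1})/2)`, equals the Hamiltonian of the `D̂_N`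
relativistic Toda lattice with coupling `g = 1`. -/
theorem DN_dimer_first_hamiltonian (N : ℕ) (hN : 3 ≤ N) (q p : ℕ → ℝ)
    (S : ℕ → ℝ)
    (hS : S = fun n =>
      if n = 0 then Real.exp (-2 * q 1)
      else if n = N then Real.exp (2 * q N)
      else Real.exp (q n - q (n + 1) + (-1 : ℝ) ^ n * (p n - p (n + 1)) / 2)) :
    (∑ n ∈ Finset.Icc 1 N, 2 * Real.cosh (p n))
      + (∑ n ∈ Finset.Icc 1 (N - 1),
          S n * (Real.exp (-(-1 : ℝ) ^ n * p n) + Real.exp (-(-1 : ℝ) ^ (n + 1) * p (n + 1))))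
      + S 1 * S 0 * (Real.exp (p 1) + Real.exp (-p 2))
      + S (N - 1) * S N *
          (Real.exp (-(-1 : ℝ) ^ (N - 1) * p (N - 1)) + Real.exp (-(-1 : ℝ) ^ N * p N))
      + Real.exp (-2 * q 2) + Real.exp (2 * q (N - 1))
    = (∑ n ∈ Finset.Icc 1 N, 2 * Real.cosh (p n))
      + (∑ n ∈ Finset.Icc 1 (N - 1),
          2 * Real.exp (q n - q (n + 1)) * Real.cosh ((p n + p (n + 1)) / 2))
      + 2 * Real.exp (-q 1 - q 2) * Real.cosh ((p 1 + p 2) / 2)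
      + 2 * Real.exp (q (N - 1) + q N) * Real.cosh ((p (N - 1) + p N) / 2)
      + Real.exp (-2 * q 2) + Real.exp (2 * q (N - 1)) := by
  have hS_bulk : ∀ n, n ≠ 0 → n ≠ N →
      S n = exp (q n - q (n + 1) + (-1) ^ n * (p n - p (n + 1)) / 2) := by
    intro n h0 hnN
    simp [hS, h0, hnN]
  have hS0 : S 0 = exp (-2 * q 1) := by simp [hS]
  have hSN : S N = exp (2 * q N) := by simp [hS, show N ≠ 0 by omega]
  have hN1 : N - 1 + 1 = N := by omega
  have hbulk : ∀ n ∈ Finset.Icc 1 (N - 1),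
      S n * (exp (-(-1) ^ n * p n) + exp (-(-1) ^ (n + 1) * p (n + 1)))
        = 2 * exp (q n - q (n + 1)) * cosh ((p n + p (n + 1)) / 2) := by
    intro n hn
    rw [Finset.mem_Icc] at hn
    rw [hS_bulk n (by omega) (by omega), exp_add_neg_one_pow_half_sub_mul]
  have hleft : S 1 * S 0 * (exp (p 1) + exp (-p 2))
      = 2 * exp (-q 1 - q 2) * cosh ((p 1 + p 2) / 2) := by
    have h := exp_add_neg_one_pow_half_sub_mul_exp_mul (q 1 - q 2) (-2 * q 1) (p 1) (p 2) 1
    rw [hS_bulk 1 one_ne_zero (by omega), hS0]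
    convert h using 3 <;> norm_num
    ring
  have hright : S (N - 1) * S N *
        (exp (-(-1) ^ (N - 1) * p (N - 1)) + exp (-(-1) ^ N * p N))
      = 2 * exp (q (N - 1) + q N) * cosh ((p (N - 1) + p N) / 2) := by
    have h := exp_add_neg_one_pow_half_sub_mul_exp_mul (q (N - 1) - q N) (2 * q N)
      (p (N - 1)) (p N) (N - 1)
    rw [hN1] at h
    rw [hS_bulk (N - 1) (by omega) (by omega), hN1, hSN, h]
    ring_nf
  rw [Finset.sum_congr rfl hbulk, hleft, hright]
end
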